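/- Let E = {±(1,1), ±(0,2), ±(1,3), ±(2,4)} ⊆ ℤ², the set of even roots of brj(2;5). The ℤ-linear map T: ℤ² → ℤ² determined by T(1,0) = (1,2) and T(0,1) = (0,1) is invertible over ℚ and maps the root system of type C₂, namely {±2f₁, ±2f₂, ±f₁±f₂} where f₁=(1,0), f₂=(0,1), bijectively onto E. (This reflects the isomorphism brj(2;5)_even ≅ sp(4).) -/
import Mathlib


/-- The even roots of brj(2;5). -/
def brj25EvenRoots : Finset (Fin 2 → ℤ) :=
  {![1, 1],
   ![-1, -1],
   ![0, 2],
   ![0, -2],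
   ![1, 3],
   ![-1, -3],
   ![2, 4],
   ![-2, -4]}

/-- The root system of type C₂: ±2f₁, ±2f₂, ±f₁±f₂. -/
def c2Roots : Finset (Fin 2 → ℤ) :=
  {![2, 0],
   ![-2, 0],
   ![0, 2],
   ![0, -2],
   ![1, 1],
   ![-1, -1],
   ![1, -1],
   ![-1, 1]}

/-- The matrix of the ℤ-linear map T with T(1,0) = (1,2), T(0,1) = (0,1). -/
def brj25T : Matrix (Fin 2) (Fin 2) ℤ := !![1, 0; 2, 1]

theorem brj25_even_is_C2 :
    brj25T.mulVec ![1, 0] = ![1, 2] ∧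
    brj25T.mulVec ![0, 1] = ![0, 1] ∧
    (brj25T.map ((↑) : ℤ → ℚ)).det ≠ 0 ∧
    c2Roots.image brj25T.mulVec = brj25EvenRoots ∧
    Set.InjOn brj25T.mulVec (c2Roots : Set (Fin 2 → ℤ)) := by
  refine ⟨?_, ?_, ?_, ?_, ?_⟩
  · funext i; fin_cases i <;> simp [brj25T, Matrix.mulVec, dotProduct]
  · funext i; fin_cases i <;> simp [brj25T, Matrix.mulVec, dotProduct]
  · simp [brj25T, Matrix.det_fin_two]
  · decide
  · intro x _ y _ h
    have h0 := congrFun h 0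
    have h1 := congrFun h 1
    simp [brj25T, Matrix.mulVec, dotProduct, Fin.sum_univ_two] at h0 h1
    funext i
    fin_cases i <;> simp <;> omega
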